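/- arXiv:1306.3956 — 2 statements merged into one kernel-verified Lean document; each statement's English description precedes it below -/
import Mathlib

section
/- (Banach–Kac formula) Let g : [a,b] → ℝ be continuously differentiable. Then for every continuous f : ℝ → ℝ, ∫_ℝ f(x) C^g(x) dx = ∫_a^b f(g(t)) |g'(t)| dt, where C^g(x) = #{t ∈ [a,b] : g(t) = x} is the number of crossings of level x. -/
/-!
Split `U = {t ∈ (a, b) | g' t ≠ 0}` into its connected components, countably many open
intervals. By Darboux, `g'` has constant sign on each of them, so `g` is injective there and the
injective change of variables formula applies on every piece; summing over the pieces counts,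
at each level `x`, the points of `U` with `g t = x`. What is left, `g '' ({a, b} ∪ {g' = 0})`,
is Lebesgue-null by the one-dimensional Sard lemma, so it changes neither side.
-/

open MeasureTheory Set Function

section ConnectedComponents

variable {X : Type*} [TopologicalSpace X]

theorem iUnion_connectedComponentIn_image (U : Set X) :
    ⋃ c : connectedComponentIn U '' U, (c : Set X) = U := by
  refine Subset.antisymm (iUnion_subset ?_) fun x hx => ?_
  · rintro ⟨_, x, -, rfl⟩
    exact connectedComponentIn_subset U x
  · exact mem_iUnion.2 ⟨⟨_, mem_image_of_mem _ hx⟩, mem_connectedComponentIn hx⟩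

theorem pairwise_disjoint_connectedComponentIn_image (U : Set X) :
    Pairwise (Disjoint on fun c : connectedComponentIn U '' U => (c : Set X)) := by
  intro c d hne
  obtain ⟨x, -, hx⟩ := c.2
  obtain ⟨y, -, hy⟩ := d.2
  refine Set.disjoint_left.2 fun z (hzc : z ∈ (c : Set X)) (hzd : z ∈ (d : Set X)) =>
    hne (Subtype.ext ?_)
  rw [← hx, ← hy] at *
  exact (connectedComponentIn_eq hzc).trans (connectedComponentIn_eq hzd).symm

theorem IsOpen.countable_connectedComponentIn_image [TopologicalSpace.SeparableSpace X]
    [LocallyConnectedSpace X] {U : Set X} (hU : IsOpen U) :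
    Countable (connectedComponentIn U '' U) := by
  refine (pairwise_disjoint_connectedComponentIn_image U).countable_of_isOpen_disjoint ?_ ?_
  · rintro ⟨_, x, -, rfl⟩
    exact hU.connectedComponentIn
  · rintro ⟨_, x, hx, rfl⟩
    exact ⟨x, mem_connectedComponentIn hx⟩

end ConnectedComponents

theorem Convex.injOn_of_hasDerivWithinAt_ne_zero {s : Set ℝ} {g g' : ℝ → ℝ} (hs : Convex ℝ s)
    (hg : ∀ t ∈ s, HasDerivWithinAt g (g' t) s t) (hg' : ∀ t ∈ s, g' t ≠ 0) : InjOn g s := by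
  have hcont : ContinuousOn g s := fun t ht => (hg t ht).continuousWithinAt
  have hint : ∀ t ∈ interior s, HasDerivWithinAt g (g' t) (interior s) t := fun t ht =>
    (hg t (interior_subset ht)).mono interior_subset
  -- Darboux: a derivative that does not vanish has constant sign.
  rcases hasDerivWithinAt_forall_lt_or_forall_gt_of_forall_ne hs hg hg' with hneg | hpos
  · exact (strictAntiOn_of_hasDerivWithinAt_neg hs hcont hint
      fun t ht => hneg t (interior_subset ht)).injOn
  · exact (strictMonoOn_of_hasDerivWithinAt_pos hs hcont hint
      fun t ht => hpos t (interior_subset ht)).injOn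

theorem volume_image_eq_zero_of_hasDerivWithinAt_eq_zero {s : Set ℝ} {g g' : ℝ → ℝ}
    (hg : ∀ t ∈ s, HasDerivWithinAt g (g' t) s t) (hg' : ∀ t ∈ s, g' t = 0) :
    volume (g '' s) = 0 :=
  addHaar_image_eq_zero_of_det_fderivWithin_eq_zero volume
    (fun t ht => (hg t ht).hasFDerivWithinAt)
    (fun t ht => by rw [ContinuousLinearMap.det_toSpanSingleton, hg' t ht])

theorem ncard_setOf_mem_iUnion_eq_tsum_indicator {ι α β : Type*} {c : ι → Set α}
    (hd : Pairwise (Disjoint on c)) {g : α → β} (hg : ∀ i, InjOn g (c i)) (x : β) :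
    ({t ∈ ⋃ i, c i | g t = x}.ncard : ℝ) = ∑' i, (g '' c i).indicator 1 x := by
  -- If infinitely many pieces meet the level set, both sides are junk `0`: `ncard` of an infinite
  -- set and the `tsum` of a non-summable family.
  set A : Set ι := {i | x ∈ g '' c i}
  have hA : A.ncard = {t ∈ ⋃ i, c i | g t = x}.ncard := by
    refine Set.ncard_congr (fun i hi => hi.choose) (fun i hi => ⟨mem_iUnion.2 ⟨i, hi.choose_spec.1⟩,
      hi.choose_spec.2⟩) (fun i j hi hj hij => ?_) fun t ⟨ht, hgt⟩ => ?_
    · by_contra hne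
      exact (hd hne).ne_of_mem hi.choose_spec.1 hj.choose_spec.1 hij
    · obtain ⟨i, hti⟩ := mem_iUnion.1 ht
      have hi : i ∈ A := ⟨t, hti, hgt⟩
      exact ⟨i, hi, hg i hi.choose_spec.1 hti (hi.choose_spec.2.trans hgt.symm)⟩
  calc ({t ∈ ⋃ i, c i | g t = x}.ncard : ℝ) = ∑' _ : A, (1 : ℝ) := by
        rw [tsum_const, ← hA, ← Nat.card_coe_set_eq, nsmul_one]
    _ = ∑' i, (g '' c i).indicator 1 x := tsum_subtype A 1

section AreaFormula

variable {ι : Type*} {c : ι → Set ℝ} {g g' : ℝ → ℝ}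

theorem integral_indicator_image_eq_setIntegral_abs_deriv_mul {s : Set ℝ} (hc : MeasurableSet s)
    (hg : ∀ t ∈ s, HasDerivWithinAt g (g' t) s t) (hinj : InjOn g s) (f : ℝ → ℝ) :
    ∫ x, (g '' s).indicator f x = ∫ t in s, |g' t| * f (g t) := by
  rw [integral_indicator (measurable_image_of_fderivWithin hc
    (fun t ht => (hg t ht).hasFDerivWithinAt) hinj)]
  exact integral_image_eq_integral_abs_deriv_smul hc hg hinj f

theorem integral_mul_ncard_setOf_mem_iUnion [Countable ι] (hc : ∀ i, MeasurableSet (c i))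
    (hd : Pairwise (Disjoint on c)) (hg : ∀ i, ∀ t ∈ c i, HasDerivWithinAt g (g' t) (c i) t)
    (hinj : ∀ i, InjOn g (c i)) {f : ℝ → ℝ}
    (hf : IntegrableOn (fun t => |g' t| * f (g t)) (⋃ i, c i)) :
    ∫ x, f x * {t ∈ ⋃ i, c i | g t = x}.ncard = ∫ t in ⋃ i, c i, |g' t| * f (g t) := by
  have hmeas i : MeasurableSet (g '' c i) :=
    measurable_image_of_fderivWithin (hc i) (fun t ht => (hg i t ht).hasFDerivWithinAt) (hinj i)
  have hint i : Integrable ((g '' c i).indicator f) := by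
    refine IntegrableOn.integrable_indicator ?_ (hmeas i)
    rw [integrableOn_image_iff_integrableOn_abs_deriv_smul (hc i) (hg i) (hinj i)]
    exact hf.mono_set (subset_iUnion c i)
  have hsum : Summable fun i => ∫ x, ‖(g '' c i).indicator f x‖ := by
    refine (hasSum_integral_iUnion hc hd hf.norm).summable.congr fun i => ?_
    simp only [norm_indicator_eq_indicator_norm, norm_mul, norm_abs_eq_norm, Real.norm_eq_abs]
    exact (integral_indicator_image_eq_setIntegral_abs_deriv_mul (hc i) (hg i) (hinj i)
      fun x => |f x|).symm
  calc ∫ x, f x * {t ∈ ⋃ i, c i | g t = x}.ncard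
      = ∫ x, ∑' i, (g '' c i).indicator f x := by
        congr 1 with x
        rw [ncard_setOf_mem_iUnion_eq_tsum_indicator hd hinj, ← tsum_mul_left]
        congr 1 with i
        by_cases hx : x ∈ g '' c i <;> simp [hx]
    _ = ∑' i, ∫ x, (g '' c i).indicator f x :=
        (integral_tsum_of_summable_integral_norm hint hsum).symm
    _ = ∑' i, ∫ t in c i, |g' t| * f (g t) := by
        simp_rw [integral_indicator_image_eq_setIntegral_abs_deriv_mul (hc _) (hg _) (hinj _)]
    _ = ∫ t in ⋃ i, c i, |g' t| * f (g t) := (hasSum_integral_iUnion hc hd hf).tsum_eq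

theorem IsOpen.integral_mul_ncard_setOf_mem {U : Set ℝ} (hU : IsOpen U)
    (hg : ∀ t ∈ U, HasDerivAt g (g' t) t) (hg' : ∀ t ∈ U, g' t ≠ 0) {f : ℝ → ℝ}
    (hf : IntegrableOn (fun t => |g' t| * f (g t)) U) :
    ∫ x, f x * {t ∈ U | g t = x}.ncard = ∫ t in U, |g' t| * f (g t) := by
  have := hU.countable_connectedComponentIn_image
  have hsub (c : connectedComponentIn U '' U) : (c : Set ℝ) ⊆ U := by
    obtain ⟨x, -, hx⟩ := c.2
    exact hx ▸ connectedComponentIn_subset U x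
  have hderiv (c : connectedComponentIn U '' U) : ∀ t ∈ (c : Set ℝ),
      HasDerivWithinAt g (g' t) c t := fun t ht => (hg t (hsub c ht)).hasDerivWithinAt
  have hinj (c : connectedComponentIn U '' U) : InjOn g c := by
    obtain ⟨x, -, hx⟩ := c.2
    refine Convex.injOn_of_hasDerivWithinAt_ne_zero ?_ (hderiv c) fun t ht => hg' t (hsub c ht)
    exact hx ▸ isPreconnected_connectedComponentIn.ordConnected.convex
  have hopen (c : connectedComponentIn U '' U) : IsOpen (c : Set ℝ) := by
    obtain ⟨x, -, hx⟩ := c.2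
    exact hx ▸ hU.connectedComponentIn
  have key := integral_mul_ncard_setOf_mem_iUnion (fun c => (hopen c).measurableSet)
    (pairwise_disjoint_connectedComponentIn_image U) hderiv hinj
    (by rwa [iUnion_connectedComponentIn_image])
  rwa [iUnion_connectedComponentIn_image] at key

end AreaFormula

theorem ae_setOf_mem_eq_of_measure_image_sdiff_eq_zero {α β : Type*} [MeasurableSpace β]
    {μ : Measure β} {s t : Set α} {g : α → β} (hts : t ⊆ s) (h : μ (g '' (s \ t)) = 0) :
    ∀ᵐ x ∂μ, {u ∈ s | g u = x} = {u ∈ t | g u = x} := by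
  refine measure_mono_null (fun x hx => ?_) h
  by_contra hx'
  refine hx (Subset.antisymm (fun u ⟨hus, hgu⟩ => ⟨?_, hgu⟩) fun u ⟨hut, hgu⟩ => ⟨hts hut, hgu⟩)
  by_contra hut
  exact hx' ⟨u, ⟨hus, hut⟩, hgu⟩

theorem stmt_18 (a b : ℝ) (hab : a ≤ b) (g g' : ℝ → ℝ)
    (hderiv : ∀ t ∈ Set.Icc a b, HasDerivWithinAt g (g' t) (Set.Icc a b) t)
    (hcont : ContinuousOn g' (Set.Icc a b))
    (f : ℝ → ℝ) (hf : Continuous f) :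
    ∫ x : ℝ, f x * (({t ∈ Set.Icc a b | g t = x}).ncard : ℝ) =
      ∫ t in a..b, f (g t) * |g' t| := by
  set U := Ioo a b ∩ g' ⁻¹' {0}ᶜ
  have hUI : U ⊆ Icc a b := fun t ht => Ioo_subset_Icc_self ht.1
  have hU : IsOpen U := (hcont.mono Ioo_subset_Icc_self).isOpen_inter_preimage isOpen_Ioo
    isOpen_compl_singleton
  have hnull : volume (g '' (Icc a b \ U)) = 0 := by
    rw [sdiff_inter, Icc_sdiff_Ioo_same hab, preimage_compl, sdiff_compl, image_union]
    refine measure_union_null (((toFinite _).image g).measure_zero _) ?_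
    exact volume_image_eq_zero_of_hasDerivWithinAt_eq_zero
      (fun t ht => (hderiv t ht.1).mono inter_subset_left) fun t ht => ht.2
  have hint : IntegrableOn (fun t => |g' t| * f (g t)) (Icc a b) :=
    (hcont.abs.mul (hf.comp_continuousOn fun t ht => (hderiv t ht).continuousWithinAt))
      |>.integrableOn_compact isCompact_Icc
  calc ∫ x, f x * {t ∈ Icc a b | g t = x}.ncard
      = ∫ x, f x * {t ∈ U | g t = x}.ncard :=
        integral_congr_ae <| (ae_setOf_mem_eq_of_measure_image_sdiff_eq_zero hUI hnull).mono
          fun x hx => by simp only [hx]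
    _ = ∫ t in U, |g' t| * f (g t) :=
        hU.integral_mul_ncard_setOf_mem
          (fun t ht => (hderiv t (hUI ht)).hasDerivAt (Icc_mem_nhds ht.1.1 ht.1.2))
          (fun t ht => ht.2) (hint.mono_set hUI)
    _ = ∫ t in Ioo a b, |g' t| * f (g t) := by
        refine (setIntegral_eq_of_subset_of_forall_sdiff_eq_zero measurableSet_Ioo
          inter_subset_left fun t ht => ?_).symm
        rw [of_not_not (not_and.1 ht.2 ht.1), abs_zero, zero_mul]
    _ = ∫ t in Icc a b, |g' t| * f (g t) := integral_Icc_eq_integral_Ioo.symm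
    _ = ∫ t in a..b, f (g t) * |g' t| := by
        rw [intervalIntegral.integral_of_le hab, ← integral_Icc_eq_integral_Ioc]
        simp_rw [mul_comm]
end

section
/- Let 0 < α < 2 and k ∈ ℕ with k ≥ 1, and let C(t,s) = t^α + s^α − |t−s|^α for t,s ∈ [0,1]. Then the n×n matrix Σ = (C(t_i,t_j))_{i,j} is positive semidefinite for any 0 ≤ t_1 < … < t_n ≤ 1. -/
/-!
For `0 < α < 2` and `c = ∫₀^∞ (1 - cos u) u^(-1-α) du > 0`, the substitution `u ↦ u / |a|`
gives `|a|^α = c⁻¹ ∫₀^∞ (1 - cos (a u)) u^(-1-α) du`. Since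
`(1 - cos a) + (1 - cos b) - (1 - cos (a - b)) = (1 - cos a)(1 - cos b) + sin a sin b`,
the kernel `|s|^α + |t|^α - |s - t|^α` is then an integral, against a positive weight, of the
Gram kernels of `u ↦ 1 - cos (s u)` and `u ↦ sin (s u)`, hence positive semidefinite.
-/

open MeasureTheory Real Set Finset Matrix

noncomputable def levyIntegrand (α a u : ℝ) : ℝ := (1 - cos (a * u)) * u ^ (-1 - α)

noncomputable def levyIntegral (α a : ℝ) : ℝ := ∫ u in Ioi 0, levyIntegrand α a u

section Levy

variable {α : ℝ}

lemma levyIntegrand_nonneg (α a : ℝ) {u : ℝ} (hu : 0 ≤ u) : 0 ≤ levyIntegrand α a u :=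
  mul_nonneg (sub_nonneg.2 (cos_le_one _)) (rpow_nonneg hu _)

lemma continuousOn_levyIntegrand (α a : ℝ) : ContinuousOn (levyIntegrand α a) (Ioi 0) :=
  (continuous_const.sub (continuous_cos.comp (continuous_const_mul a))).continuousOn.mul
    (continuousOn_id.rpow_const fun _ hu => Or.inl (ne_of_gt hu))

lemma levyIntegrand_le_sq_mul_rpow (α a : ℝ) {u : ℝ} (hu : 0 < u) :
    levyIntegrand α a u ≤ a ^ 2 / 2 * u ^ (1 - α) := by
  have hcos : 1 - cos (a * u) ≤ (a * u) ^ 2 / 2 := by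
    linarith [one_sub_sq_div_two_le_cos (x := a * u)]
  calc levyIntegrand α a u ≤ (a * u) ^ 2 / 2 * u ^ (-1 - α) :=
        mul_le_mul_of_nonneg_right hcos (rpow_nonneg hu.le _)
    _ = a ^ 2 / 2 * (u ^ (2 : ℝ) * u ^ (-1 - α)) := by rw [rpow_two]; ring
    _ = a ^ 2 / 2 * u ^ (1 - α) := by rw [← rpow_add hu]; ring_nf

lemma levyIntegrand_le_two_mul_rpow (α a : ℝ) {u : ℝ} (hu : 0 ≤ u) :
    levyIntegrand α a u ≤ 2 * u ^ (-1 - α) :=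
  mul_le_mul_of_nonneg_right (by linarith [neg_one_le_cos (a * u)]) (rpow_nonneg hu _)

lemma integrableOn_levyIntegrand (hα0 : 0 < α) (hα2 : α < 2) (a : ℝ) :
    IntegrableOn (levyIntegrand α a) (Ioi 0) := by
  have hmeas :=
    (continuousOn_levyIntegrand α a).aestronglyMeasurable (μ := volume) measurableSet_Ioi
  have hnorm : ∀ u ∈ Ioi (0 : ℝ), ‖levyIntegrand α a u‖ = levyIntegrand α a u :=
    fun u hu => Real.norm_of_nonneg (levyIntegrand_nonneg α a (le_of_lt hu))
  have hnear : IntegrableOn (levyIntegrand α a) (Ioc 0 1) := by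
    have hdom : IntegrableOn (fun u : ℝ => a ^ 2 / 2 * u ^ (1 - α)) (Ioc 0 1) :=
      ((intervalIntegrable_iff_integrableOn_Ioc_of_le zero_le_one).1
        (intervalIntegral.intervalIntegrable_rpow' (by linarith))).const_mul _
    refine hdom.mono' (hmeas.mono_set Ioc_subset_Ioi_self) ?_
    refine (ae_restrict_iff' measurableSet_Ioc).2 (ae_of_all _ fun u hu => ?_)
    rw [hnorm u hu.1]
    exact levyIntegrand_le_sq_mul_rpow α a hu.1
  have hfar : IntegrableOn (levyIntegrand α a) (Ioi 1) := by
    have hdom : IntegrableOn (fun u : ℝ => 2 * u ^ (-1 - α)) (Ioi 1) :=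
      (integrableOn_Ioi_rpow_of_lt (by linarith) one_pos).const_mul 2
    refine hdom.mono' (hmeas.mono_set (Ioi_subset_Ioi zero_le_one)) ?_
    refine (ae_restrict_iff' measurableSet_Ioi).2 (ae_of_all _ fun u hu => ?_)
    have hu0 : (0 : ℝ) < u := zero_lt_one.trans hu
    rw [hnorm u hu0]
    exact levyIntegrand_le_two_mul_rpow α a hu0.le
  simpa only [Ioc_union_Ioi_eq_Ioi zero_le_one] using hnear.union hfar

lemma levyIntegrand_neg (α a : ℝ) : levyIntegrand α (-a) = levyIntegrand α a := by
  ext u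
  simp only [levyIntegrand, neg_mul, cos_neg]

lemma levyIntegrand_of_pos (α : ℝ) {a u : ℝ} (ha : 0 < a) (hu : 0 ≤ u) :
    levyIntegrand α a u = a ^ (1 + α) * levyIntegrand α 1 (a * u) := by
  have hcancel : a ^ (1 + α) * a ^ (-1 - α) = 1 := by
    rw [← rpow_add ha, show 1 + α + (-1 - α) = 0 by ring, rpow_zero]
  simp only [levyIntegrand, one_mul, mul_rpow ha.le hu]
  linear_combination (1 - cos (a * u)) * u ^ (-1 - α) * hcancel.symm

lemma levyIntegral_of_pos (α : ℝ) {a : ℝ} (ha : 0 < a) :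
    levyIntegral α a = a ^ α * levyIntegral α 1 := by
  calc levyIntegral α a = ∫ u in Ioi 0, a ^ (1 + α) * levyIntegrand α 1 (a * u) :=
        setIntegral_congr_fun measurableSet_Ioi fun u hu => levyIntegrand_of_pos α ha (le_of_lt hu)
    _ = a ^ (1 + α) * (a⁻¹ * levyIntegral α 1) := by
        rw [integral_const_mul, integral_comp_mul_left_Ioi _ _ ha, mul_zero, smul_eq_mul,
          levyIntegral]
    _ = a ^ α * levyIntegral α 1 := by
        rw [← rpow_neg_one, ← mul_assoc, ← rpow_add ha, add_neg_cancel_comm]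

lemma levyIntegral_eq_abs_rpow_mul (hα0 : 0 < α) (a : ℝ) :
    levyIntegral α a = |a| ^ α * levyIntegral α 1 := by
  rcases lt_trichotomy a 0 with ha | rfl | ha
  · rw [abs_of_neg ha, ← levyIntegral_of_pos α (neg_pos.2 ha), levyIntegral, levyIntegral,
      levyIntegrand_neg]
  · simp [levyIntegral, levyIntegrand, zero_rpow hα0.ne']
  · rw [abs_of_pos ha, levyIntegral_of_pos α ha]

lemma levyIntegral_one_pos (hα0 : 0 < α) (hα2 : α < 2) : 0 < levyIntegral α 1 := by
  have hpos : ∀ u ∈ Ioo (0 : ℝ) 1, 0 < levyIntegrand α 1 u := by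
    intro u hu
    have hcos : cos u < 1 := by
      refine lt_of_le_of_ne (cos_le_one u) fun h => ?_
      have := (cos_eq_one_iff_of_lt_of_lt (by linarith [hu.1, pi_gt_three])
        (by linarith [hu.2, pi_gt_three])).1 h
      linarith [hu.1]
    exact mul_pos (by rw [one_mul]; linarith) (rpow_pos_of_pos hu.1 _)
  rw [levyIntegral, setIntegral_pos_iff_support_of_nonneg_ae
    (ae_restrict_of_forall_mem measurableSet_Ioi fun u hu =>
      levyIntegrand_nonneg α 1 (le_of_lt hu))
    (integrableOn_levyIntegrand hα0 hα2 1)]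
  calc (0 : ENNReal) < volume (Ioo (0 : ℝ) 1) := by simp
    _ ≤ volume (Function.support (levyIntegrand α 1) ∩ Ioi 0) :=
        measure_mono fun u hu => ⟨(hpos u hu).ne', hu.1⟩

end Levy

section Kernel

variable {ι : Type*} [Fintype ι] {α : ℝ}

lemma sum_sum_mul_one_sub_cos (x a : ι → ℝ) :
    ∑ i, ∑ j, x i * x j * ((1 - cos (a i)) + (1 - cos (a j)) - (1 - cos (a i - a j))) =
      (∑ i, x i * (1 - cos (a i))) ^ 2 + (∑ i, x i * sin (a i)) ^ 2 := by
  rw [sq, sq, sum_mul_sum, sum_mul_sum, ← sum_add_distrib]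
  refine sum_congr rfl fun i _ => ?_
  rw [← sum_add_distrib]
  refine sum_congr rfl fun j _ => ?_
  rw [cos_sub]
  ring

lemma sum_sum_mul_levyIntegrand_nonneg (α : ℝ) (x t : ι → ℝ) {u : ℝ} (hu : 0 ≤ u) :
    0 ≤ ∑ i, ∑ j, x i * x j *
      (levyIntegrand α (t i) u + levyIntegrand α (t j) u - levyIntegrand α (t i - t j) u) := by
  have hsq : ∑ i, ∑ j, x i * x j *
      (levyIntegrand α (t i) u + levyIntegrand α (t j) u - levyIntegrand α (t i - t j) u) =
      ((∑ i, x i * (1 - cos (t i * u))) ^ 2 + (∑ i, x i * sin (t i * u)) ^ 2) *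
        u ^ (-1 - α) := by
    rw [← sum_sum_mul_one_sub_cos x (fun i => t i * u), sum_mul]
    refine sum_congr rfl fun i _ => ?_
    rw [sum_mul]
    refine sum_congr rfl fun j _ => ?_
    simp only [levyIntegrand, sub_mul]
    ring
  rw [hsq]
  have := rpow_nonneg hu (-1 - α)
  positivity

lemma sum_sum_mul_levyIntegral_nonneg (hα0 : 0 < α) (hα2 : α < 2) (x t : ι → ℝ) :
    0 ≤ ∑ i, ∑ j, x i * x j *
      (levyIntegral α (t i) + levyIntegral α (t j) - levyIntegral α (t i - t j)) := by
  have hint := integrableOn_levyIntegrand hα0 hα2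
  have hint' : ∀ i j, IntegrableOn (fun u => x i * x j *
      (levyIntegrand α (t i) u + levyIntegrand α (t j) u - levyIntegrand α (t i - t j) u))
      (Ioi 0) :=
    fun i j => (((hint _).add (hint _)).sub (hint _)).const_mul _
  have hterm : ∀ i j, x i * x j *
      (levyIntegral α (t i) + levyIntegral α (t j) - levyIntegral α (t i - t j)) =
      ∫ u in Ioi 0, x i * x j *
        (levyIntegrand α (t i) u + levyIntegrand α (t j) u - levyIntegrand α (t i - t j) u) := by
    intro i j
    rw [integral_const_mul, levyIntegral, levyIntegral, levyIntegral,
      ← integral_add (hint _) (hint _), ← integral_sub ?_ (hint _)]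
    exact (hint _).add (hint _)
  have hswap : ∀ i, ∑ j, ∫ u in Ioi 0, x i * x j *
      (levyIntegrand α (t i) u + levyIntegrand α (t j) u - levyIntegrand α (t i - t j) u) =
      ∫ u in Ioi 0, ∑ j, x i * x j *
        (levyIntegrand α (t i) u + levyIntegrand α (t j) u - levyIntegrand α (t i - t j) u) :=
    fun i => (integral_finsetSum _ fun j _ => hint' i j).symm
  simp only [hterm, hswap]
  rw [← integral_finsetSum _ fun i _ => integrable_finsetSum _ fun j _ => hint' i j]
  exact setIntegral_nonneg measurableSet_Ioi fun u hu =>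
    sum_sum_mul_levyIntegrand_nonneg α x t (le_of_lt hu)

end Kernel

theorem Matrix.posSemidef_abs_rpow_kernel {ι : Type*} [Fintype ι] {α : ℝ} (hα0 : 0 < α)
    (hα2 : α < 2) (t : ι → ℝ) :
    (of fun i j => |t i| ^ α + |t j| ^ α - |t i - t j| ^ α).PosSemidef := by
  refine .of_dotProduct_mulVec_nonneg ?_ fun x => ?_
  · ext i j
    simp only [conjTranspose_apply, of_apply, star_trivial, abs_sub_comm (t j)]
    ring
  · have hscale : star x ⬝ᵥ ((of fun i j => |t i| ^ α + |t j| ^ α - |t i - t j| ^ α) *ᵥ x)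
        * levyIntegral α 1 = ∑ i, ∑ j, x i * x j *
          (levyIntegral α (t i) + levyIntegral α (t j) - levyIntegral α (t i - t j)) := by
      simp only [dotProduct, mulVec, of_apply, Pi.star_apply, star_trivial, sum_mul]
      refine sum_congr rfl fun i _ => ?_
      rw [mul_sum, sum_mul]
      refine sum_congr rfl fun j _ => ?_
      rw [levyIntegral_eq_abs_rpow_mul hα0 (t i), levyIntegral_eq_abs_rpow_mul hα0 (t j),
        levyIntegral_eq_abs_rpow_mul hα0 (t i - t j)]
      ring
    exact nonneg_of_mul_nonneg_left (hscale ▸ sum_sum_mul_levyIntegral_nonneg hα0 hα2 x t)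
      (levyIntegral_one_pos hα0 hα2)

theorem stmt_19_general (α : ℝ) (hα0 : 0 < α) (hα2 : α < 2) (n : ℕ)
    (t : Fin n → ℝ) (ht : ∀ i, t i ∈ Set.Icc (0:ℝ) 1) :
    Matrix.PosSemidef (Matrix.of fun i j : Fin n =>
      t i ^ α + t j ^ α - |t i - t j| ^ α) := by
  have habs : ∀ i, |t i| = t i := fun i => abs_of_nonneg (ht i).1
  simpa only [habs] using Matrix.posSemidef_abs_rpow_kernel hα0 hα2 t

theorem stmt_19 (α : ℝ) (hα0 : 0 < α) (hα2 : α < 2) (n : ℕ)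
    (t : Fin n → ℝ) (ht : ∀ i, t i ∈ Set.Icc (0:ℝ) 1) (hmono : StrictMono t) :
    Matrix.PosSemidef (Matrix.of fun i j : Fin n =>
      t i ^ α + t j ^ α - |t i - t j| ^ α) :=
  stmt_19_general α hα0 hα2 n t ht
end
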